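/- Let f : ℝ^d → ℝ be convex and Lipschitz continuous, and suppose f is symmetric with respect to a point x⋆ ∈ ℝ^d, i.e., f(x⋆ + x) = f(x⋆ − x) for all x ∈ ℝ^d. Let μ ∈ ℝ^d, let Σ be a d×d positive definite matrix, let X ~ N(μ, Σ), and let λ ∈ [0,1]. Then E[f((1−λ)·X + λ·μ)] ≥ E[f((1−λ)·X + λ·x⋆)]. (Equivalently, the Gaussian optimistic smoothing surrogate s of f built from N(μ, Σ) and λ satisfies s(μ) ≥ s(x⋆).) -/

import Mathlib

/-!
Put `Y = (1 - λ) X + λ μ` and `Y' = (1 - λ) (2 μ - X) + λ μ`; since `N(μ, Σ)` is invariant under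
`x ↦ 2 μ - x`, `Y'` has the same law as `Y`. Pointwise,
`(1 - λ) X + λ x⋆ = (1 - λ/2) Y + (λ/2) (2 x⋆ - Y')`, and `f (2 x⋆ - Y') = f Y'` by symmetry, so
convexity gives `E f((1 - λ) X + λ x⋆) ≤ (1 - λ/2) E f(Y) + (λ/2) E f(Y') = E f(Y)`.
All expectations are finite because a Lipschitz function grows linearly while the Gaussian
density is dominated by a product of one-dimensional Gaussians.
-/

open MeasureTheory Matrix

/-- The density of the Gaussian distribution `N(μ, Σ)` on `ℝ^d` (for `Σ` positive
definite) with respect to Lebesgue measure. -/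
noncomputable def gaussPdf (d : ℕ) (μ : Fin d → ℝ) (S : Matrix (Fin d) (Fin d) ℝ)
    (x : Fin d → ℝ) : ℝ :=
  (2 * Real.pi) ^ (-(d : ℝ) / 2) * Real.sqrt S.det⁻¹ *
    Real.exp (-(1 / 2) * ((x - μ) ⬝ᵥ S⁻¹.mulVec (x - μ)))

open Set Real NNReal

theorem exists_pos_mul_norm_sq_le {E : Type*} [NormedAddCommGroup E] [NormedSpace ℝ E]
    [FiniteDimensional ℝ E] {q : E → ℝ} (hq : Continuous q)
    (hsmul : ∀ (c : ℝ) (v : E), q (c • v) = c ^ 2 * q v) (hpos : ∀ v ≠ 0, 0 < q v) :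
    ∃ ε > 0, ∀ v, ε * ‖v‖ ^ 2 ≤ q v := by
  obtain ⟨ε, hε, hle⟩ := (isCompact_sphere (0 : E) 1).exists_forall_le' hq.continuousOn
    fun v hv => hpos v (ne_zero_of_mem_unit_sphere ⟨v, hv⟩)
  refine ⟨ε, hε, fun v => ?_⟩
  rcases eq_or_ne v 0 with rfl | hv
  · simp [show q 0 = 0 by simpa using hsmul 0 0]
  · have hv' : 0 < ‖v‖ := norm_pos_iff.mpr hv
    calc ε * ‖v‖ ^ 2 ≤ ‖v‖ ^ 2 * q (‖v‖⁻¹ • v) := by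
          rw [mul_comm]
          exact mul_le_mul_of_nonneg_left (hle _ (by simp [norm_smul, hv])) (by positivity)
      _ = q v := by rw [hsmul, ← mul_assoc, ← mul_pow, mul_inv_cancel₀ hv'.ne', one_pow, one_mul]

theorem Matrix.PosDef.exists_pos_mul_sum_sq_le {n : Type*} [Fintype n] {T : Matrix n n ℝ}
    (hT : T.PosDef) : ∃ ε > 0, ∀ v : n → ℝ, ε * ∑ i, v i ^ 2 ≤ v ⬝ᵥ T *ᵥ v := by
  obtain ⟨ε, hε, hle⟩ := exists_pos_mul_norm_sq_le (E := EuclideanSpace ℝ n)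
    (q := fun w => w.ofLp ⬝ᵥ T *ᵥ w.ofLp) (by fun_prop)
    (fun c w => by
      simp only [WithLp.ofLp_smul, mulVec_smul, dotProduct_smul, smul_dotProduct, smul_eq_mul]
      ring)
    (fun w hw => by simpa using hT.dotProduct_mulVec_pos (x := w.ofLp) (by simpa using hw))
  exact ⟨ε, hε, fun v => by simpa [EuclideanSpace.real_norm_sq_eq] using hle (WithLp.toLp 2 v)⟩

theorem LipschitzWith.abs_le_mul_one_add_norm {E : Type*} [SeminormedAddCommGroup E] {K : ℝ≥0}
    {g : E → ℝ} (hg : LipschitzWith K g) (x : E) : |g x| ≤ (|g 0| + K) * (1 + ‖x‖) := by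
  have h := hg.dist_le_mul x 0
  rw [Real.dist_eq, dist_zero_right] at h
  have := abs_sub_abs_le_abs_sub (g x) (g 0)
  nlinarith [abs_nonneg (g 0), norm_nonneg x, K.2]

theorem one_add_norm_le_prod_one_add_abs {ι : Type*} [Fintype ι] (x : ι → ℝ) :
    1 + ‖x‖ ≤ ∏ i, (1 + |x i|) := by
  classical
  have hone : ∀ s : Finset ι, 1 ≤ ∏ i ∈ s, (1 + |x i|) := fun s =>
    Finset.one_le_prod fun i _ => le_add_of_nonneg_right (abs_nonneg _)
  rw [← le_sub_iff_add_le', pi_norm_le_iff_of_nonneg (by linarith [hone Finset.univ])]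
  intro i
  rw [le_sub_iff_add_le', Real.norm_eq_abs, ← Finset.mul_prod_erase _ _ (Finset.mem_univ i)]
  exact le_mul_of_one_le_right (by positivity) (hone _)

theorem integrable_one_add_abs_mul_exp_neg_mul_sq_sub {b : ℝ} (hb : 0 < b) (m : ℝ) :
    Integrable fun t : ℝ => (1 + |t|) * exp (-b * (t - m) ^ 2) := by
  have habs : Integrable fun s : ℝ => |s| * exp (-b * s ^ 2) := by
    simpa [abs_mul] using (integrable_mul_exp_neg_mul_sq hb).abs
  have hmaj := (((integrable_exp_neg_mul_sq hb).const_mul (1 + |m|)).add habs).comp_sub_right m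
  refine hmaj.mono' (by fun_prop) (ae_of_all _ fun t => ?_)
  simp only [Pi.add_apply]
  have htri : |t| ≤ |t - m| + |m| := by simpa using abs_add_le (t - m) m
  rw [Real.norm_eq_abs, abs_of_nonneg (by positivity)]
  nlinarith [exp_pos (-b * (t - m) ^ 2)]

section Gaussian

variable {d : ℕ} {μ : Fin d → ℝ} {S : Matrix (Fin d) (Fin d) ℝ}

theorem gaussPdf_nonneg (x : Fin d → ℝ) : 0 ≤ gaussPdf d μ S x := by
  unfold gaussPdf
  positivity

theorem gaussPdf_two_smul_sub (x : Fin d → ℝ) :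
    gaussPdf d μ S ((2 : ℝ) • μ - x) = gaussPdf d μ S x := by
  have h : (2 : ℝ) • μ - x - μ = -(x - μ) := by module
  simp only [gaussPdf, h, mulVec_neg, dotProduct_neg, neg_dotProduct, neg_neg]

theorem gaussPdf_le_mul_prod_exp (hS : S.PosDef) :
    ∃ b > 0, ∀ x, gaussPdf d μ S x ≤ gaussPdf d μ S μ * ∏ i, exp (-b * (x i - μ i) ^ 2) := by
  obtain ⟨ε, hε, hle⟩ := hS.inv.exists_pos_mul_sum_sq_le
  refine ⟨ε / 2, by positivity, fun x => ?_⟩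
  have hK : 0 ≤ (2 * π) ^ (-(d : ℝ) / 2) * √S.det⁻¹ := by positivity
  simp only [gaussPdf, sub_self, zero_dotProduct, mul_zero, exp_zero, mul_one, ← exp_sum]
  refine mul_le_mul_of_nonneg_left (exp_le_exp.mpr ?_) hK
  have := hle (x - μ)
  simp only [Pi.sub_apply] at this
  rw [← Finset.mul_sum]
  linarith

theorem integrable_mul_gaussPdf_of_lipschitzWith (hS : S.PosDef) {K : ℝ≥0}
    {g : (Fin d → ℝ) → ℝ} (hg : LipschitzWith K g) :
    Integrable fun x => g x * gaussPdf d μ S x := by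
  obtain ⟨b, hb, hle⟩ := gaussPdf_le_mul_prod_exp (μ := μ) hS
  have hmaj : Integrable fun x : Fin d → ℝ => ∏ i, (1 + |x i|) * exp (-b * (x i - μ i) ^ 2) :=
    Integrable.fintype_prod fun i => integrable_one_add_abs_mul_exp_neg_mul_sq_sub hb (μ i)
  refine (hmaj.const_mul ((|g 0| + K) * gaussPdf d μ S μ)).mono'
    (hg.continuous.aestronglyMeasurable.mul (by unfold gaussPdf; fun_prop))
    (ae_of_all _ fun x => ?_)
  rw [Real.norm_eq_abs, abs_mul, abs_of_nonneg (gaussPdf_nonneg x), Finset.prod_mul_distrib]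
  calc |g x| * gaussPdf d μ S x
      ≤ ((|g 0| + K) * ∏ i, (1 + |x i|)) *
          (gaussPdf d μ S μ * ∏ i, exp (-b * (x i - μ i) ^ 2)) :=
        mul_le_mul ((hg.abs_le_mul_one_add_norm x).trans
            (mul_le_mul_of_nonneg_left (one_add_norm_le_prod_one_add_abs x) (by positivity)))
          (hle x) (gaussPdf_nonneg x) (by positivity)
    _ = _ := by ring

theorem integral_mul_gaussPdf_le_of_le_reflect {g h : (Fin d → ℝ) → ℝ}
    (hg : Integrable fun x => g x * gaussPdf d μ S x)
    (hh : Integrable fun x => h x * gaussPdf d μ S x) (t : ℝ)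
    (hle : ∀ x, h x ≤ (1 - t) * g x + t * g ((2 : ℝ) • μ - x)) :
    ∫ x, h x * gaussPdf d μ S x ≤ ∫ x, g x * gaussPdf d μ S x := by
  have hrefl : (fun x => g ((2 : ℝ) • μ - x) * gaussPdf d μ S x) =
      fun x => (fun y => g y * gaussPdf d μ S y) ((2 : ℝ) • μ - x) := by
    simp only [gaussPdf_two_smul_sub]
  have hg' : Integrable fun x => g ((2 : ℝ) • μ - x) * gaussPdf d μ S x :=
    hrefl ▸ hg.comp_sub_left _
  calc ∫ x, h x * gaussPdf d μ S x
      ≤ ∫ x, (1 - t) * (g x * gaussPdf d μ S x) + t * (g ((2 : ℝ) • μ - x) * gaussPdf d μ S x) :=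
        integral_mono hh ((hg.const_mul _).add (hg'.const_mul _)) fun x => by
          have := mul_le_mul_of_nonneg_right (hle x) (gaussPdf_nonneg (μ := μ) (S := S) x)
          linarith
    _ = ∫ x, g x * gaussPdf d μ S x := by
        rw [integral_add (hg.const_mul _) (hg'.const_mul _), integral_const_mul, integral_const_mul,
          hrefl, integral_sub_left_eq_self (fun y => g y * gaussPdf d μ S y)]
        ring

end Gaussian

theorem ConvexOn.apply_add_smul_sub_le_of_symm {E : Type*} [AddCommGroup E] [Module ℝ E] {f : E → ℝ}
    (hf : ConvexOn ℝ univ f) {c : E} (hsymm : ∀ v, f (c + v) = f (c - v)) {t : ℝ} (ht₀ : 0 ≤ t)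
    (ht₂ : t ≤ 2) (m u : E) :
    f (m + u + t • (c - m)) ≤ (1 - t / 2) * f (m + u) + t / 2 * f (m - u) := by
  have hpt : m + u + t • (c - m) = (1 - t / 2) • (m + u) + (t / 2) • (c + (c - m + u)) := by
    module
  have hrefl : f (c + (c - m + u)) = f (m - u) := by
    rw [hsymm]
    congr 1
    abel
  rw [hpt, ← hrefl]
  exact hf.2 (mem_univ _) (mem_univ _) (by linarith) (by linarith) (by ring)

/-- If `f : ℝ^d → ℝ` is convex, Lipschitz, and symmetric about `x⋆`, `X ~ N(μ, Σ)` with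
`Σ` positive definite, and `λ ∈ [0,1]`, then
`E[f((1−λ)X + λμ)] ≥ E[f((1−λ)X + λx⋆)]`; equivalently, the Gaussian optimistic
smoothing surrogate `s` of `f` satisfies `s(μ) ≥ s(x⋆)`. -/
theorem stmt_18 (d : ℕ) (f : (Fin d → ℝ) → ℝ)
    (hconv : ConvexOn ℝ Set.univ f) (hlip : ∃ L : NNReal, LipschitzWith L f)
    (xs : Fin d → ℝ) (hsymm : ∀ x : Fin d → ℝ, f (xs + x) = f (xs - x))
    (μ : Fin d → ℝ) (S : Matrix (Fin d) (Fin d) ℝ) (hS : S.PosDef)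
    (lam : ℝ) (hlam0 : 0 ≤ lam) (hlam1 : lam ≤ 1) :
    (∫ x : Fin d → ℝ, f ((1 - lam) • x + lam • xs) * gaussPdf d μ S x) ≤
      ∫ x : Fin d → ℝ, f ((1 - lam) • x + lam • μ) * gaussPdf d μ S x := by
  obtain ⟨L, hf⟩ := hlip
  have hint (a : ℝ) (b : Fin d → ℝ) : Integrable fun x => f (a • x + b) * gaussPdf d μ S x :=
    integrable_mul_gaussPdf_of_lipschitzWith hS
      (hf.comp ((lipschitzWith_smul a).add (LipschitzWith.const b)))
  refine integral_mul_gaussPdf_le_of_le_reflect (hint _ _) (hint _ _) (lam / 2) fun x => ?_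
  have key := hconv.apply_add_smul_sub_le_of_symm hsymm hlam0 (by linarith) μ ((1 - lam) • (x - μ))
  have hxs : (1 - lam) • x + lam • xs = μ + (1 - lam) • (x - μ) + lam • (xs - μ) := by module
  have hx : (1 - lam) • x + lam • μ = μ + (1 - lam) • (x - μ) := by module
  have hx' : (1 - lam) • ((2 : ℝ) • μ - x) + lam • μ = μ - (1 - lam) • (x - μ) := by module
  simpa only [hxs, hx, hx'] using key
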